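/- arXiv:1103.4157 — 3 statements merged into one kernel-verified Lean document; each statement's English description precedes it below -/
import Mathlib

section
/- Let G be a countable group acting measurably on a measure space (X, μ) by measure-preserving maps, and let F ⊆ X be a measurable fundamental domain for the action. If C ⊆ X is a measurable set and m is a natural number such that μ(C) > m · μ(F), then there exists a point x ∈ F and m pairwise distinct group elements g₁, ..., g_m ∈ G such that gᵢ • x ∈ C for every i ∈ {1, ..., m}. -/
/-!
Counting, for each `x ∈ F`, the group elements `g` with `g • x ∈ C` and integrating over `F`
recovers `μ C`, because the translates of `F` tile `X` and the action preserves `μ`. If this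
count were below `m` everywhere on `F`, the integral would be at most `m * μ F < μ C`.
-/

open MeasureTheory
open scoped ENNReal

theorem Set.nonempty_fin_embedding_of_le_encard {α : Type*} {s : Set α} {m : ℕ}
    (h : m ≤ s.encard) : Nonempty (Fin m ↪ s) := by
  obtain ⟨y, -⟩ := Fin.Embedding.exists_embedding_disjoint_range_of_add_le_ENat_card
    (s := (∅ : Set s)) (n := m) (by simpa using h)
  exact ⟨y⟩

theorem ENNReal.tsum_indicator_one_eq_encard {ι : Type*} (s : Set ι) :
    ∑' i, s.indicator 1 i = (s.encard : ℝ≥0∞) :=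
  (tsum_subtype s 1).symm.trans (ENNReal.tsum_set_one s)

namespace MeasureTheory

theorem exists_mem_le_of_mul_measure_lt_setLIntegral {α : Type*} [MeasurableSpace α]
    {μ : Measure α} {s : Set α} (hs : NullMeasurableSet s μ) {f : α → ℝ≥0∞} {c : ℝ≥0∞}
    (h : c * μ s < ∫⁻ x in s, f x ∂μ) : ∃ x ∈ s, c ≤ f x := by
  by_contra! hlt
  refine h.not_ge ?_
  calc ∫⁻ x in s, f x ∂μ ≤ ∫⁻ _ in s, c ∂μ :=
        lintegral_mono_ae ((ae_restrict_mem₀ hs).mono fun x hx => (hlt x hx).le)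
    _ = c * μ s := setLIntegral_const s c

theorem IsFundamentalDomain.setLIntegral_encard_smul_mem {G α : Type*} [Group G] [Countable G]
    [MulAction G α] [MeasurableSpace α] [MeasurableConstSMul G α] {μ : Measure α}
    [SMulInvariantMeasure G α μ] {s t : Set α} (hs : IsFundamentalDomain G s μ)
    (ht : MeasurableSet t) :
    ∫⁻ x in s, ({g : G | g • x ∈ t}.encard : ℝ≥0∞) ∂μ = μ t := by
  have hmeas (g : G) : Measurable fun x : α => t.indicator (1 : α → ℝ≥0∞) (g • x) :=
    (measurable_one.indicator ht).comp (measurable_const_smul g)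
  calc ∫⁻ x in s, ({g : G | g • x ∈ t}.encard : ℝ≥0∞) ∂μ
      = ∫⁻ x in s, ∑' g : G, t.indicator 1 (g • x) ∂μ :=
        lintegral_congr fun x => (ENNReal.tsum_indicator_one_eq_encard _).symm
    _ = ∑' g : G, ∫⁻ x in s, t.indicator 1 (g • x) ∂μ :=
        lintegral_tsum fun g => (hmeas g).aemeasurable
    _ = ∫⁻ x, t.indicator 1 x ∂μ := (hs.lintegral_eq_tsum'' _).symm
    _ = μ t := lintegral_indicator_one ht

end MeasureTheory

theorem blichfeldt_pigeonhole_general {X : Type*} [MeasurableSpace X]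
    {G : Type*} [Group G] [Countable G] [MulAction G X]
    (μ : Measure X)
    (hmeas : ∀ g : G, Measurable fun x : X => g • x)
    [SMulInvariantMeasure G X μ]
    {F C : Set X}
    (hF : IsFundamentalDomain G F μ) (hC : MeasurableSet C)
    (m : ℕ) (hm : (m : ℝ≥0∞) * μ F < μ C) :
    ∃ x ∈ F, ∃ g : Fin m → G, Function.Injective g ∧ ∀ i, g i • x ∈ C := by
  have : MeasurableConstSMul G X := ⟨hmeas⟩
  rw [← hF.setLIntegral_encard_smul_mem hC] at hm
  obtain ⟨x, hxF, hx⟩ := exists_mem_le_of_mul_measure_lt_setLIntegral hF.nullMeasurableSet hm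
  obtain ⟨g⟩ := Set.nonempty_fin_embedding_of_le_encard (ENat.toENNReal_le.mp hx)
  exact ⟨x, hxF, fun i => g i, fun i j hij => g.injective (Subtype.ext hij), fun i => (g i).2⟩

/-- **Pigeonhole core of Blichfeldt's theorem for group actions.**
If `G` is a countable group acting measurably on a measure space `(X, μ)` by
measure-preserving maps, `F` is a measurable fundamental domain, `C` is measurable and
`μ C > m * μ F`, then some point `x ∈ F` admits `m` pairwise distinct group elements
sending it into `C`. -/
theorem blichfeldt_pigeonhole {X : Type*} [MeasurableSpace X]
    {G : Type*} [Group G] [Countable G] [MulAction G X]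
    (μ : Measure X)
    (hmeas : ∀ g : G, Measurable fun x : X => g • x)
    [SMulInvariantMeasure G X μ]
    {F C : Set X} (hFmeas : MeasurableSet F)
    (hF : IsFundamentalDomain G F μ) (hC : MeasurableSet C)
    (m : ℕ) (hm : (m : ℝ≥0∞) * μ F < μ C) :
    ∃ x ∈ F, ∃ g : Fin m → G, Function.Injective g ∧ ∀ i, g i • x ∈ C :=
  blichfeldt_pigeonhole_general μ hmeas hF hC m hm
end

section
/- Let G be a countable group acting measurably and freely on a measure space (X, μ) by measure-preserving maps, and let F ⊆ X be a measurable fundamental domain for the action. If C ⊆ X is a measurable set and m is a natural number with μ(C) > m · μ(F), then there exist m pairwise distinct points x₁, ..., x_m ∈ C that all lie in a single G-orbit. -/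
/-!
Count, for each point `x`, the group elements moving `x` into `C`. Unfolding `μ C` over the
translates of the fundamental domain `F` shows that `μ C` is the integral of this count over `F`.
For a free action the count at `x` is the number of points of `C` in the orbit of `x`; if every
orbit met `C` in fewer than `m` points, the integral would be at most `m * μ F`.
-/

open MeasureTheory Set
open scoped ENNReal

theorem Set.exists_injective_fin_of_le_encard {α : Type*} {s : Set α} {m : ℕ}
    (h : (m : ℕ∞) ≤ s.encard) : ∃ x : Fin m → α, x.Injective ∧ ∀ i, x i ∈ s := by
  obtain ⟨e, -⟩ := Fin.Embedding.exists_embedding_disjoint_range_of_add_le_ENat_card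
    (s := (∅ : Set s)) (n := m) (by simpa using h)
  exact ⟨fun i => e i, Subtype.val_injective.comp e.injective, fun i => (e i).2⟩

section

variable {G X : Type*} [Group G] [MulAction G X]

theorem MulAction.smul_left_injective_of_free (hfree : ∀ (g : G) (x : X), g • x = x → g = 1)
    (x : X) : Function.Injective (· • x : G → X) := by
  intro g h (hgh : g • x = h • x)
  exact (inv_mul_eq_one.mp (hfree (h⁻¹ * g) x (by rw [mul_smul, hgh, inv_smul_smul]))).symm

theorem MulAction.encard_preimage_smul_eq_encard_inter_orbit
    (hfree : ∀ (g : G) (x : X), g • x = x → g = 1) (C : Set X) (x : X) :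
    ((· • x) ⁻¹' C : Set G).encard = (C ∩ MulAction.orbit G x).encard := by
  rw [← (MulAction.smul_left_injective_of_free hfree x).encard_image,
    image_preimage_eq_inter_range]
  rfl

theorem tsum_indicator_one_smul_eq_encard (C : Set X) (x : X) :
    ∑' g : G, C.indicator 1 (g • x) = (((· • x) ⁻¹' C : Set G).encard : ℝ≥0∞) := by
  rw [← ENNReal.tsum_set_one, tsum_subtype _ fun _ => (1 : ℝ≥0∞)]
  rfl

theorem MeasureTheory.IsFundamentalDomain.measure_eq_setLIntegral_encard_preimage_smul
    [Countable G] [MeasurableSpace X] [MeasurableConstSMul G X] {μ : Measure X}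
    [SMulInvariantMeasure G X μ] {F C : Set X} (hF : IsFundamentalDomain G F μ)
    (hC : MeasurableSet C) :
    μ C = ∫⁻ x in F, (((· • x) ⁻¹' C : Set G).encard : ℝ≥0∞) ∂μ := by
  have hmeas : ∀ g : G, Measurable fun x => C.indicator (1 : X → ℝ≥0∞) (g • x) := fun g =>
    (measurable_one.indicator hC).comp (measurable_const_smul g)
  calc μ C = ∫⁻ x, C.indicator 1 x ∂μ := (lintegral_indicator_one hC).symm
    _ = ∑' g : G, ∫⁻ x in F, C.indicator 1 (g⁻¹ • x) ∂μ := hF.lintegral_eq_tsum' _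
    _ = ∑' g : G, ∫⁻ x in F, C.indicator 1 (g • x) ∂μ :=
      (Equiv.inv G).tsum_eq fun g => ∫⁻ x in F, C.indicator 1 (g • x) ∂μ
    _ = ∫⁻ x in F, ∑' g : G, C.indicator 1 (g • x) ∂μ :=
      (lintegral_tsum fun g => (hmeas g).aemeasurable).symm
    _ = _ := by simp_rw [tsum_indicator_one_smul_eq_encard]

end

theorem blichfeldt_free_action_general {X : Type*} [MeasurableSpace X]
    {G : Type*} [Group G] [Countable G] [MulAction G X]
    (μ : Measure X)
    (hmeas : ∀ g : G, Measurable fun x : X => g • x)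
    [SMulInvariantMeasure G X μ]
    (hfree : ∀ (g : G) (x : X), g • x = x → g = 1)
    {F C : Set X}
    (hF : IsFundamentalDomain G F μ) (hC : MeasurableSet C)
    (m : ℕ) (hm : (m : ℝ≥0∞) * μ F < μ C) :
    ∃ x : Fin m → X, Function.Injective x ∧ (∀ i, x i ∈ C) ∧
      ∃ y : X, ∀ i, x i ∈ MulAction.orbit G y := by
  have : MeasurableConstSMul G X := ⟨hmeas⟩
  obtain ⟨y, hy⟩ : ∃ y, (m : ℕ∞) ≤ (C ∩ MulAction.orbit G y).encard := by
    by_contra! hsmall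
    refine hm.not_ge ?_
    calc μ C = ∫⁻ y in F, ((C ∩ MulAction.orbit G y).encard : ℝ≥0∞) ∂μ := by
          simp_rw [hF.measure_eq_setLIntegral_encard_preimage_smul hC,
            MulAction.encard_preimage_smul_eq_encard_inter_orbit hfree]
      _ ≤ ∫⁻ _ in F, (m : ℝ≥0∞) ∂μ := lintegral_mono fun y =>
        (ENat.toENNReal_le.mpr (hsmall y).le).trans_eq (ENat.toENNReal_coe m)
      _ = m * μ F := by rw [setLIntegral_const]
  obtain ⟨x, hx_inj, hx⟩ := exists_injective_fin_of_le_encard hy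
  exact ⟨x, hx_inj, fun i => (hx i).1, y, fun i => (hx i).2⟩

/-- **Blichfeldt's theorem for free actions: distinct points in one orbit.**
If a countable group `G` acts measurably, freely, and measure-preservingly on `(X, μ)`
with measurable fundamental domain `F`, and `C` is a measurable set with
`μ C > m * μ F`, then there are `m` pairwise distinct points of `C` lying in a single
`G`-orbit. -/
theorem blichfeldt_free_action {X : Type*} [MeasurableSpace X]
    {G : Type*} [Group G] [Countable G] [MulAction G X]
    (μ : Measure X)
    (hmeas : ∀ g : G, Measurable fun x : X => g • x)
    [SMulInvariantMeasure G X μ]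
    (hfree : ∀ (g : G) (x : X), g • x = x → g = 1)
    {F C : Set X} (hFmeas : MeasurableSet F)
    (hF : IsFundamentalDomain G F μ) (hC : MeasurableSet C)
    (m : ℕ) (hm : (m : ℝ≥0∞) * μ F < μ C) :
    ∃ x : Fin m → X, Function.Injective x ∧ (∀ i, x i ∈ C) ∧
      ∃ y : X, ∀ i, x i ∈ MulAction.orbit G y :=
  blichfeldt_free_action_general μ hmeas hfree hF hC m hm
end

section
/- Let K be a metric space equipped with a Borel measure μ, let G be a countable group acting on K by isometries that preserve μ, and let F ⊆ K be a measurable fundamental domain for the action with 0 < μ(F) < ∞. Fix q ∈ K and suppose there is a constant D > 0 such that for every y ∈ K there exists g ∈ G with dist(g • y, q) ≤ D. Assume moreover that every ball in K has finite μ-measure. For t > 0 let N_q(t) denote the number of group elements g ∈ G with g ≠ 1 and dist(q, g • q) ≤ t, and fix x₀ ∈ K. Then liminf_{t → ∞} log(N_q(t)) / t ≥ (1/2) · liminf_{t → ∞} log(μ(B_t(x₀))) / t. -/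
open MeasureTheory Filter Metric
open scoped ENNReal Pointwise

/-!
Pick a bounded piece `E = F ∩ closedBall p D` of the fundamental domain with `0 < μ E`. Its
translates are almost disjoint, so the `g` with `dist q (g • q) ≤ t` number at most
`μ (ball x₀ (t + R)) / μ E`. Conversely the balls `closedBall (g • q) D` cover `K`, so
`μ (ball x₀ t)` is at most `μ (closedBall q D)` times the number of `g` with
`dist q (g • q) ≤ t + c`. Thus `log N_q` and `log μ (ball x₀ ·)` agree up to bounded shifts of
the variable and additive constants, which do not change lower exponential growth rates: the two
rates are equal, and the rate of `N_q` is nonnegative.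
-/

namespace Real

lemma log_le_log_of_le_of_one_le {x y : ℝ} (hx : 0 ≤ x) (hxy : x ≤ y) (hy : 1 ≤ y) :
    log x ≤ log y := by
  rcases hx.eq_or_lt with rfl | hx
  · simpa using log_nonneg hy
  · exact log_le_log hx hxy

lemma log_natCast_add_one_le (n : ℕ) : log (n + 1) ≤ log n + log 2 := by
  rcases n.eq_zero_or_pos with rfl | hn
  · simpa using log_nonneg one_le_two
  · rw [← log_mul (by positivity) two_ne_zero]
    exact log_le_log (by positivity) (by norm_cast; omega)

lemma sSup_le_sSup_of_forall_lt_mem {S T : Set ℝ} (hST : ∀ a ∈ S, ∀ b < a, b ∈ T)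
    (hTS : ∀ a ∈ T, ∀ b < a, b ∈ S) : sSup S ≤ sSup T := by
  by_cases hT : BddAbove T
  · rcases S.eq_empty_or_nonempty with rfl | hS
    · obtain rfl : T = ∅ := Set.eq_empty_of_forall_notMem fun a ha =>
        hTS a ha (a - 1) (sub_one_lt a)
      rfl
    · exact csSup_le hS fun a ha =>
        le_of_forall_lt_imp_le_of_dense fun b hb => le_csSup hT (hST a ha b hb)
  · have hS : ¬BddAbove S := fun ⟨M, hM⟩ => hT ⟨M + 1, fun a ha => by
      linarith [hM (hTS a ha (a - 1) (sub_one_lt a))]⟩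
    rw [sSup_of_not_bddAbove hS, sSup_of_not_bddAbove hT]

end Real

section GrowthRate

variable {u v : ℝ → ℝ}

lemma eventually_le_div_of_le_add {c C a b : ℝ} (h : ∀ᶠ t in atTop, u t ≤ v (t + c) + C)
    (ha : ∀ᶠ t in atTop, a ≤ u t / t) (hb : b < a) : ∀ᶠ t in atTop, b ≤ v t / t := by
  have hshift : Tendsto (fun t => t - c) atTop atTop :=
    tendsto_atTop_add_const_right _ _ tendsto_id
  have h' := hshift.eventually h
  have ha' := hshift.eventually ha
  filter_upwards [h', ha', eventually_gt_atTop c, eventually_gt_atTop 0,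
    eventually_gt_atTop ((a * c + C) / (a - b))] with t hle hat htc ht hlarge
  rw [sub_add_cancel] at hle
  rw [le_div_iff₀ (sub_pos.2 htc)] at hat
  rw [div_lt_iff₀ (sub_pos.2 hb)] at hlarge
  rw [le_div_iff₀ ht]
  linarith

/-- This holds also when `liminf` on `ℝ` takes its junk value `0`: the hypotheses make the two
defining sets empty, resp. unbounded above, at the same time. -/
theorem liminf_div_eq_of_le_add {c c' C C' : ℝ} (h₁ : ∀ᶠ t in atTop, u t ≤ v (t + c) + C)
    (h₂ : ∀ᶠ t in atTop, v t ≤ u (t + c') + C') :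
    liminf (fun t => u t / t) atTop = liminf (fun t => v t / t) atTop := by
  simp only [liminf_eq]
  exact le_antisymm
    (Real.sSup_le_sSup_of_forall_lt_mem (fun _ ha _ hb => eventually_le_div_of_le_add h₁ ha hb)
      (fun _ ha _ hb => eventually_le_div_of_le_add h₂ ha hb))
    (Real.sSup_le_sSup_of_forall_lt_mem (fun _ ha _ hb => eventually_le_div_of_le_add h₂ ha hb)
      (fun _ ha _ hb => eventually_le_div_of_le_add h₁ ha hb))

end GrowthRate

section OrbitCounting

variable {K G : Type*} [MetricSpace K] [Group G] [MulAction G K] [IsIsometricSMul G K]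

lemma dist_inv_smul_eq (g : G) (y q : K) : dist y (g⁻¹ • q) = dist (g • y) q := by
  rw [← dist_smul g, smul_inv_smul]

lemma ball_subset_biUnion_closedBall_smul {q : K} {D : ℝ}
    (hdense : ∀ y : K, ∃ g : G, dist (g • y) q ≤ D) (x₀ : K) (t : ℝ) :
    ball x₀ t ⊆ ⋃ g ∈ {g : G | dist q (g • q) ≤ t + dist x₀ q + D}, closedBall (g • q) D := by
  intro y hy
  obtain ⟨g, hg⟩ := hdense y
  have hy' : dist y (g⁻¹ • q) ≤ D := (dist_inv_smul_eq g y q).trans_le hg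
  refine Set.mem_biUnion (x := g⁻¹) ?_ hy'
  have := dist_triangle4 q x₀ y (g⁻¹ • q)
  rw [mem_ball'] at hy
  simp only [Set.mem_ofPred_eq]
  linarith [dist_comm q x₀]

lemma exists_measure_inter_closedBall_smul_pos [Countable G] [MeasurableSpace K] {μ : Measure K}
    {F : Set K} {q : K} {D : ℝ} (hdense : ∀ y : K, ∃ g : G, dist (g • y) q ≤ D)
    (hF : 0 < μ F) : ∃ g : G, 0 < μ (F ∩ closedBall (g • q) D) := by
  by_contra! h
  have hcover : F ⊆ ⋃ g : G, F ∩ closedBall (g • q) D := fun y hy => by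
    obtain ⟨g, hg⟩ := hdense y
    exact Set.mem_iUnion.2 ⟨g⁻¹, hy, (dist_inv_smul_eq g y q).trans_le hg⟩
  exact hF.ne' (measure_mono_null hcover (measure_iUnion_null fun g => nonpos_iff_eq_zero.1 (h g)))

variable [MeasurableSpace K] {μ : Measure K} [SMulInvariantMeasure G K μ]

lemma measure_ball_le_ncard_mul {q : K} {D : ℝ} (hdense : ∀ y : K, ∃ g : G, dist (g • y) q ≤ D)
    (x₀ : K) (t : ℝ) (hfin : {g : G | dist q (g • q) ≤ t + dist x₀ q + D}.Finite) :
    μ (ball x₀ t) ≤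
      {g : G | dist q (g • q) ≤ t + dist x₀ q + D}.ncard * μ (closedBall q D) := by
  calc μ (ball x₀ t) ≤ μ (⋃ g ∈ hfin.toFinset, closedBall (g • q) D) :=
        measure_mono (by simpa using ball_subset_biUnion_closedBall_smul hdense x₀ t)
    _ ≤ ∑ g ∈ hfin.toFinset, μ (closedBall (g • q) D) := measure_biUnion_finset_le _ _
    _ = _ := by simp [← Metric.smul_closedBall, measure_smul, Set.ncard_eq_toFinset_card _ hfin]

open Real in
lemma log_measure_ball_le_log_ncard_add {q : K} {D : ℝ}
    (hdense : ∀ y : K, ∃ g : G, dist (g • y) q ≤ D)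
    (hfin : ∀ s, {g : G | dist q (g • q) ≤ s}.Finite) (hD : μ (closedBall q D) ≠ ∞) (x₀ : K) :
    ∃ c C : ℝ, ∀ t, log (μ (ball x₀ t)).toReal ≤
      log ({g : G | g ≠ 1 ∧ dist q (g • q) ≤ t + c}.ncard : ℝ) + C := by
  -- With `M ≥ 1` the bound `(N + 1) * M` is `≥ 1`, so `log` stays monotone even on a null ball.
  set M := max (μ (closedBall q D)).toReal 1
  refine ⟨dist x₀ q + D, log 2 + log M, fun t => ?_⟩
  set N := {g : G | g ≠ 1 ∧ dist q (g • q) ≤ t + (dist x₀ q + D)}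
  have hM : 1 ≤ M := le_max_right _ _
  have hcov := measure_ball_le_ncard_mul (μ := μ) hdense x₀ t (hfin _)
  rw [add_assoc] at hcov
  have hAN : {g : G | dist q (g • q) ≤ t + (dist x₀ q + D)}.ncard ≤ N.ncard + 1 := by
    have hsub : {g : G | dist q (g • q) ≤ t + (dist x₀ q + D)} ⊆ insert 1 N :=
      fun g hg => (eq_or_ne g 1).imp id fun h1 => ⟨h1, hg⟩
    exact (Set.ncard_le_ncard hsub (((hfin _).subset fun _ hg => hg.2).insert 1)).trans
      (Set.ncard_insert_le _ _)
  have hvol : (μ (ball x₀ t)).toReal ≤ (N.ncard + 1) * M := by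
    have := ENNReal.toReal_mono (ENNReal.mul_ne_top (ENNReal.natCast_ne_top _) hD) hcov
    rw [ENNReal.toReal_mul, ENNReal.toReal_natCast] at this
    exact this.trans (mul_le_mul (by exact_mod_cast hAN) (le_max_left _ _) ENNReal.toReal_nonneg
      (by positivity))
  calc log (μ (ball x₀ t)).toReal ≤ log ((N.ncard + 1) * M) :=
        log_le_log_of_le_of_one_le ENNReal.toReal_nonneg hvol (one_le_mul_of_one_le_of_one_le
          (by linarith [N.ncard.cast_nonneg (α := ℝ)]) hM)
    _ = log (N.ncard + 1) + log M := log_mul (by positivity) (by positivity)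
    _ ≤ log N.ncard + (log 2 + log M) := by linarith [log_natCast_add_one_le N.ncard]

variable [BorelSpace K] {F E : Set K}

lemma card_mul_measure_le_measure_closedBall (hF : IsFundamentalDomain G F μ) (hEF : E ⊆ F)
    (hE : NullMeasurableSet E μ) {p : K} {r : ℝ} (hEr : E ⊆ closedBall p r) (q : K) {s : ℝ}
    (T : Finset G) (hT : ∀ g ∈ T, dist q (g • q) ≤ s) :
    T.card * μ E ≤ μ (closedBall q (s + dist q p + r)) := by
  have hsub : ∀ g ∈ T, g • E ⊆ closedBall q (s + dist q p + r) := by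
    rintro g hg - ⟨y, hy, rfl⟩
    have := dist_triangle q (g • q) (g • y)
    rw [dist_smul] at this
    have := dist_triangle q p y
    rw [mem_closedBall']
    linarith [hT g hg, mem_closedBall.1 (hEr hy), dist_comm y p]
  have hdisj : (T : Set G).Pairwise (Function.onFun (AEDisjoint μ) fun g => g • E) :=
    fun g _ h _ hgh => (hF.aedisjoint hgh).mono (Set.smul_set_mono hEF) (Set.smul_set_mono hEF)
  calc T.card * μ E = ∑ g ∈ T, μ (g • E) := by simp [measure_smul]
    _ = μ (⋃ g ∈ T, g • E) := (measure_biUnion_finset₀ hdisj fun g _ => hE.smul g).symm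
    _ ≤ _ := measure_mono (Set.iUnion₂_subset hsub)

lemma finite_setOf_dist_smul_le (hF : IsFundamentalDomain G F μ) (hEF : E ⊆ F)
    (hE : NullMeasurableSet E μ) {p : K} {r : ℝ} (hEr : E ⊆ closedBall p r) (hE0 : 0 < μ E)
    (q : K) (s : ℝ) (hfin : μ (closedBall q (s + dist q p + r)) ≠ ∞) :
    {g : G | dist q (g • q) ≤ s}.Finite := by
  by_contra hinf
  obtain ⟨n, hn⟩ := ENNReal.exists_nat_gt (ENNReal.div_ne_top hfin hE0.ne')
  obtain ⟨T, hT, rfl⟩ := Set.Infinite.exists_subset_card_eq hinf n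
  rw [ENNReal.div_lt_iff (Or.inl hE0.ne') (Or.inr hfin)] at hn
  exact (card_mul_measure_le_measure_closedBall hF hEF hE hEr q T fun g hg => hT hg).not_gt hn

open Real in
lemma log_ncard_le_log_measure_ball_add (hF : IsFundamentalDomain G F μ) (hEF : E ⊆ F)
    (hE : NullMeasurableSet E μ) {p : K} {r : ℝ} (hEr : E ⊆ closedBall p r) (hE0 : 0 < μ E)
    {q : K} (hfin : ∀ s, {g : G | dist q (g • q) ≤ s}.Finite)
    (hballs : ∀ (x : K) (r : ℝ), μ (ball x r) < ⊤) (x₀ : K) :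
    ∃ R C : ℝ, ∀ s ≥ 0, log ({g : G | g ≠ 1 ∧ dist q (g • q) ≤ s}.ncard : ℝ) ≤
      log (μ (ball x₀ (s + R))).toReal + C := by
  set ε := (μ E).toReal
  refine ⟨dist q p + r + dist q x₀ + 1, -log ε, fun s hs => ?_⟩
  set A := {g : G | dist q (g • q) ≤ s}
  have hε : 0 < ε := ENNReal.toReal_pos hE0.ne' (ne_top_of_le_ne_top (hballs p (r + 1)).ne
    (measure_mono (hEr.trans (closedBall_subset_ball (lt_add_one r)))))
  have hA : 1 ≤ A.ncard := (Set.ncard_pos (hfin s)).2 ⟨1, by simpa [A] using hs⟩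
  have hNA : {g : G | g ≠ 1 ∧ dist q (g • q) ≤ s}.ncard ≤ A.ncard :=
    Set.ncard_le_ncard (fun _ hg => hg.2) (hfin s)
  have hpack : A.ncard * μ E ≤ μ (ball x₀ (s + (dist q p + r + dist q x₀ + 1))) := by
    rw [Set.ncard_eq_toFinset_card _ (hfin s)]
    refine (card_mul_measure_le_measure_closedBall hF hEF hE hEr q _ fun g hg =>
      (hfin s).mem_toFinset.1 hg).trans (measure_mono (closedBall_subset_ball' ?_))
    linarith
  have hpack' := ENNReal.toReal_mono (hballs _ _).ne hpack
  rw [ENNReal.toReal_mul, ENNReal.toReal_natCast] at hpack'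
  calc log ({g : G | g ≠ 1 ∧ dist q (g • q) ≤ s}.ncard : ℝ) ≤ log A.ncard :=
        log_le_log_of_le_of_one_le (Nat.cast_nonneg _) (by exact_mod_cast hNA)
          (by exact_mod_cast hA)
    _ = log (A.ncard * ε) - log ε := by rw [log_mul (by positivity) hε.ne']; ring
    _ ≤ _ := by
      rw [← sub_eq_add_neg]
      exact sub_le_sub_right (log_le_log (by positivity) hpack') _

end OrbitCounting

theorem orbital_counting_entropy_lower_bound_general {K : Type*} [MetricSpace K]
    [MeasurableSpace K] [BorelSpace K]
    {G : Type*} [Group G] [Countable G] [MulAction G K]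
    (hiso : ∀ (g : G) (x y : K), dist (g • x) (g • y) = dist x y)
    (μ : Measure K) [SMulInvariantMeasure G K μ]
    {F : Set K} (hF : IsFundamentalDomain G F μ)
    (hF0 : 0 < μ F)
    (q : K) (D : ℝ)
    (hdense : ∀ y : K, ∃ g : G, dist (g • y) q ≤ D)
    (hballs : ∀ (x : K) (r : ℝ), μ (Metric.ball x r) < ⊤)
    (x₀ : K) :
    (1 / 2 : ℝ) *
        liminf (fun t : ℝ => Real.log (μ (Metric.ball x₀ t)).toReal / t) atTop ≤
      liminf (fun t : ℝ =>
        Real.log (({g : G | g ≠ 1 ∧ dist q (g • q) ≤ t}).ncard : ℝ) / t) atTop := by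
  have : IsIsometricSMul G K := ⟨fun g => Isometry.of_dist_eq (hiso g)⟩
  have hclosedBall (x : K) (r : ℝ) : μ (closedBall x r) ≠ ∞ :=
    ne_top_of_le_ne_top (hballs x (r + 1)).ne (measure_mono (closedBall_subset_ball (lt_add_one r)))
  obtain ⟨g₀, hg₀⟩ := exists_measure_inter_closedBall_smul_pos hdense hF0
  have hE := hF.nullMeasurableSet.inter
    (measurableSet_closedBall (x := g₀ • q) (ε := D)).nullMeasurableSet
  have hfin (s : ℝ) : {g : G | dist q (g • q) ≤ s}.Finite :=
    finite_setOf_dist_smul_le hF Set.inter_subset_left hE Set.inter_subset_right hg₀ q s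
      (hclosedBall _ _)
  obtain ⟨c, C, hcover⟩ := log_measure_ball_le_log_ncard_add hdense hfin (hclosedBall q D) x₀
  obtain ⟨R, C', hpack⟩ := log_ncard_le_log_measure_ball_add hF Set.inter_subset_left hE
    Set.inter_subset_right hg₀ hfin hballs x₀
  have hnonneg : 0 ≤ liminf (fun t : ℝ =>
      Real.log (({g : G | g ≠ 1 ∧ dist q (g • q) ≤ t}).ncard : ℝ) / t) atTop := by
    rw [liminf_eq]
    exact Real.sSup_nonneg' ⟨0, (eventually_ge_atTop 0).mono fun t ht =>
      div_nonneg (Real.log_natCast_nonneg _) ht, le_rfl⟩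
  rw [liminf_div_eq_of_le_add (.of_forall hcover) ((eventually_ge_atTop 0).mono hpack)]
  linarith

/-- **Half the volume entropy bounds the growth of the orbital counting function
(paper's Section 2 observation).**
Let `G` be a countable group acting on a metric space `K` by isometries preserving a
Borel measure `μ`, with measurable fundamental domain `F`, `0 < μ F < ∞`. Fix `q` and
assume the action is `D`-cocompact (`D > 0`) and every ball has finite measure. With
`N_q(t) = #{g ∈ G | g ≠ 1, dist q (g • q) ≤ t}`, we have
`liminf_{t → ∞} log (N_q t) / t ≥ (1/2) · liminf_{t → ∞} log (μ (B_t x₀)) / t`. -/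
theorem orbital_counting_entropy_lower_bound {K : Type*} [MetricSpace K]
    [MeasurableSpace K] [BorelSpace K]
    {G : Type*} [Group G] [Countable G] [MulAction G K]
    (hiso : ∀ (g : G) (x y : K), dist (g • x) (g • y) = dist x y)
    (μ : Measure K) [SMulInvariantMeasure G K μ]
    {F : Set K} (hFmeas : MeasurableSet F) (hF : IsFundamentalDomain G F μ)
    (hF0 : 0 < μ F) (hFfin : μ F < ⊤)
    (q : K) (D : ℝ) (hD : 0 < D)
    (hdense : ∀ y : K, ∃ g : G, dist (g • y) q ≤ D)
    (hballs : ∀ (x : K) (r : ℝ), μ (Metric.ball x r) < ⊤)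
    (x₀ : K) :
    (1 / 2 : ℝ) *
        liminf (fun t : ℝ => Real.log (μ (Metric.ball x₀ t)).toReal / t) atTop ≤
      liminf (fun t : ℝ =>
        Real.log (({g : G | g ≠ 1 ∧ dist q (g • q) ≤ t}).ncard : ℝ) / t) atTop :=
  orbital_counting_entropy_lower_bound_general hiso μ hF hF0 q D hdense hballs x₀
end
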